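/- arXiv:1307.3355 — 2 statements merged into one kernel-verified Lean document; each statement's English description precedes it below -/
import Mathlib

section
/- Let T > 0 and let K₁(t,s) be defined on Δ = {(t,s) : 0 ≤ s ≤ t ≤ T}, continuous together with its partial derivative ∂K₁/∂t on Δ. Set k = min_{t∈[0,T]} |K₁(t,t)| and L₁ = max_{(t,s)∈Δ} |∂K₁/∂t(t,s)|, and assume k > 0. If x : [0,T] → ℝ is continuous and y : [0,T] → ℝ is differentiable with ∫₀ᵗ K₁(t,s)·x(s) ds = y(t) for all t ∈ [0,T], then max_{t∈[0,T]} |x(t)| ≤ (1/k)·e^{L₁·T/k} · max_{t∈[0,T]} |y'(t)|. -/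
universe u v

open Set Function Filter Topology MeasureTheory intervalIntegral

/-!
Writing `K(t,s) = K(s,s) + ∫ₛᵗ ∂ₜK(τ,s) dτ` and swapping the order of integration over the
triangle `0 ≤ s ≤ τ ≤ t` shows `y(t) = ∫₀ᵗ (K(τ,τ) x(τ) + ∫₀^τ ∂ₜK(τ,s) x(s) ds) dτ`, so
differentiating turns the equation into one of the second kind,
`y'(t) = K(t,t) x(t) + ∫₀ᵗ ∂ₜK(t,s) x(s) ds`. Hence `k |x(t)| ≤ max |y'| + L₁ ∫₀ᵗ |x|`, and
Grönwall's inequality gives `|x(t)| ≤ (max |y'| / k) e^{L₁ t / k}`.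
-/

theorem ContinuousOn.exists_continuous_eqOn {X : Type u} {Y : Type v} [TopologicalSpace X]
    [NormalSpace X] [TopologicalSpace Y] [TietzeExtension.{u, v} Y] {s : Set X} {f : X → Y}
    (hs : IsClosed s) (hf : ContinuousOn f s) : ∃ g : X → Y, Continuous g ∧ EqOn g f s := by
  obtain ⟨g, hg⟩ := ContinuousMap.exists_restrict_eq hs ⟨s.domRestrict f, hf.domRestrict⟩
  exact ⟨g, g.continuous, fun x hx => congr($hg ⟨x, hx⟩)⟩

def lowerTriangle (a b : ℝ) : Set (ℝ × ℝ) := {p | a ≤ p.2 ∧ p.2 ≤ p.1 ∧ p.1 ≤ b}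

theorem isCompact_lowerTriangle (a b : ℝ) : IsCompact (lowerTriangle a b) := by
  refine (isCompact_Icc (a := (a, a)) (b := (b, b))).of_isClosed_subset ?_ ?_
  · exact (isClosed_le continuous_const continuous_snd).inter
      ((isClosed_le continuous_snd continuous_fst).inter
        (isClosed_le continuous_fst continuous_const))
  · rintro ⟨τ, s⟩ ⟨h₁, h₂, h₃⟩
    exact ⟨⟨h₁.trans h₂, h₁⟩, h₃, h₂.trans h₃⟩

theorem integral_eq_sub_of_hasDerivWithinAt_Icc {f f' : ℝ → ℝ} {a b : ℝ} (hab : a ≤ b)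
    (hf : ∀ x ∈ Icc a b, HasDerivWithinAt f (f' x) (Icc a b) x)
    (hf' : IntervalIntegrable f' volume a b) : ∫ x in a..b, f' x = f b - f a :=
  integral_eq_sub_of_hasDerivAt_of_le hab (fun x hx => (hf x hx).continuousWithinAt)
    (fun x hx => (hf x (Ioo_subset_Icc_self hx)).hasDerivAt (Icc_mem_nhds hx.1 hx.2)) hf'

theorem integral_integral_triangle_swap {F : ℝ → ℝ → ℝ} (hF : Continuous (uncurry F)) {a t : ℝ}
    (hat : a ≤ t) :
    ∫ s in a..t, ∫ τ in s..t, F τ s = ∫ τ in a..t, ∫ s in a..τ, F τ s := by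
  -- Both sections use the strict inequality `s < τ`; the diagonal is null for each of them.
  set G : ℝ → ℝ → ℝ := fun τ s => {p : ℝ × ℝ | p.2 < p.1}.indicator (uncurry F) (τ, s)
  have hG : Integrable (uncurry G)
      ((volume.restrict (Ioc a t)).prod (volume.restrict (Ioc a t))) := by
    rw [Measure.prod_restrict, ← Measure.volume_eq_prod]
    refine IntegrableOn.indicator ?_ (measurableSet_lt measurable_snd measurable_fst)
    exact (hF.continuousOn.integrableOn_compact (isCompact_Icc.prod isCompact_Icc)).mono_set
      (prod_mono Ioc_subset_Icc_self Ioc_subset_Icc_self)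
  have hleft : ∀ s ∈ Ioc a t, ∫ τ in s..t, F τ s = ∫ τ in Ioc a t, G τ s := by
    intro s hs
    have hsec : Ioc a t ∩ Ioi s = Ioc s t := by
      ext τ; simp only [mem_inter_iff, mem_Ioc, mem_Ioi]; grind
    rw [integral_of_le hs.2, ← hsec, ← setIntegral_indicator measurableSet_Ioi]
    rfl
  have hright : ∀ τ ∈ Ioc a t, ∫ s in a..τ, F τ s = ∫ s in Ioc a t, G τ s := by
    intro τ hτ
    have hsec : Ioc a t ∩ Iio τ = Ioo a τ := by
      ext s; simp only [mem_inter_iff, mem_Ioc, mem_Iio, mem_Ioo]; grind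
    rw [integral_of_le hτ.1.le, integral_Ioc_eq_integral_Ioo, ← hsec,
      ← setIntegral_indicator measurableSet_Iio]
    rfl
  rw [integral_of_le hat, integral_of_le hat, setIntegral_congr_fun measurableSet_Ioc hleft,
    setIntegral_congr_fun measurableSet_Ioc hright]
  exact (integral_integral_swap hG).symm

section Volterra

variable {A B : ℝ → ℝ → ℝ} {a b : ℝ}

theorem integral_eq_integral_diag_add_integral (hA : Continuous (uncurry A))
    (hB : Continuous (uncurry B))
    (hAB : ∀ s t, a ≤ s → s ≤ t → t ≤ b → A t s = A s s + ∫ τ in s..t, B τ s)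
    {t : ℝ} (ht : t ∈ Icc a b) :
    ∫ s in a..t, A t s = ∫ τ in a..t, (A τ τ + ∫ s in a..τ, B τ s) := by
  have hdiag : Continuous fun s => A s s := hA.comp (continuous_id.prodMk continuous_id)
  have htail : Continuous fun s => ∫ τ in s..t, B τ s := by
    simp_rw [integral_symm t]
    exact (continuous_parametric_intervalIntegral_of_continuous (f := fun s τ => B τ s)
      (hB.comp continuous_swap) continuous_id).neg
  have hhead : Continuous fun τ => ∫ s in a..τ, B τ s :=
    continuous_parametric_intervalIntegral_of_continuous hB continuous_id
  calc ∫ s in a..t, A t s = ∫ s in a..t, (A s s + ∫ τ in s..t, B τ s) := by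
        refine integral_congr fun s hs => ?_
        rw [uIcc_of_le ht.1] at hs
        exact hAB s t hs.1 hs.2 ht.2
    _ = (∫ s in a..t, A s s) + ∫ s in a..t, ∫ τ in s..t, B τ s :=
        integral_add (hdiag.intervalIntegrable _ _) (htail.intervalIntegrable _ _)
    _ = (∫ τ in a..t, A τ τ) + ∫ τ in a..t, ∫ s in a..τ, B τ s := by
        rw [integral_integral_triangle_swap hB ht.1]
    _ = ∫ τ in a..t, (A τ τ + ∫ s in a..τ, B τ s) :=
        (integral_add (hdiag.intervalIntegrable _ _) (hhead.intervalIntegrable _ _)).symm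

theorem hasDerivWithinAt_integral_volterra (hA : Continuous (uncurry A))
    (hB : Continuous (uncurry B))
    (hAB : ∀ s t, a ≤ s → s ≤ t → t ≤ b → A t s = A s s + ∫ τ in s..t, B τ s)
    {t : ℝ} (ht : t ∈ Icc a b) :
    HasDerivWithinAt (fun t => ∫ s in a..t, A t s) (A t t + ∫ s in a..t, B t s) (Icc a b) t := by
  have hH : Continuous fun τ => A τ τ + ∫ s in a..τ, B τ s :=
    (hA.comp (continuous_id.prodMk continuous_id)).add
      (continuous_parametric_intervalIntegral_of_continuous hB continuous_id)
  exact (hH.integral_hasStrictDerivAt a t).hasDerivAt.hasDerivWithinAt.congr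
    (fun u hu => integral_eq_integral_diag_add_integral hA hB hAB hu)
    (integral_eq_integral_diag_add_integral hA hB hAB ht)

end Volterra

theorem continuousOn_integral_of_continuousOn_lowerTriangle {F : ℝ → ℝ → ℝ} {a b : ℝ}
    (hF : ContinuousOn (fun p : ℝ × ℝ => F p.1 p.2) (lowerTriangle a b)) :
    ContinuousOn (fun t => ∫ s in a..t, F t s) (Icc a b) := by
  obtain ⟨G, hG, hGF⟩ := hF.exists_continuous_eqOn (isCompact_lowerTriangle a b).isClosed
  refine (continuous_parametric_intervalIntegral_of_continuous (f := fun t s => G (t, s)) hG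
    continuous_id).continuousOn.congr fun t ht => integral_congr fun s hs => ?_
  rw [uIcc_of_le ht.1] at hs
  exact (hGF (show (t, s) ∈ lowerTriangle a b from ⟨hs.1, hs.2, ht.2⟩)).symm

theorem hasDerivWithinAt_integral_kernel_mul {K Kt : ℝ → ℝ → ℝ} {x : ℝ → ℝ} {a b t : ℝ}
    (hK : ContinuousOn (fun p : ℝ × ℝ => K p.1 p.2) (lowerTriangle a b))
    (hKd : ∀ s t, a ≤ s → s ≤ t → t ≤ b →
      HasDerivWithinAt (fun τ => K τ s) (Kt t s) (Icc s b) t)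
    (hKt : ContinuousOn (fun p : ℝ × ℝ => Kt p.1 p.2) (lowerTriangle a b))
    (hx : ContinuousOn x (Icc a b)) (ht : t ∈ Icc a b) :
    HasDerivWithinAt (fun t => ∫ s in a..t, K t s * x s)
      (K t t * x t + ∫ s in a..t, Kt t s * x s) (Icc a b) t := by
  have hmem {s t : ℝ} (hs : a ≤ s) (hst : s ≤ t) (ht : t ≤ b) : (t, s) ∈ lowerTriangle a b :=
    ⟨hs, hst, ht⟩
  -- Tietze extensions of `K`, `Kt` and `x` reduce the claim to globally continuous data.
  obtain ⟨A, hA, hAK⟩ := hK.exists_continuous_eqOn (isCompact_lowerTriangle a b).isClosed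
  obtain ⟨B, hB, hBK⟩ := hKt.exists_continuous_eqOn (isCompact_lowerTriangle a b).isClosed
  obtain ⟨X, hX, hXx⟩ := hx.exists_continuous_eqOn isClosed_Icc
  have hAB (s t : ℝ) (hs : a ≤ s) (hst : s ≤ t) (ht : t ≤ b) :
      A (t, s) * X s = A (s, s) * X s + ∫ τ in s..t, B (τ, s) * X s := by
    have hderiv : ∀ τ ∈ Icc s t, HasDerivWithinAt (fun τ => A (τ, s)) (B (τ, s)) (Icc s t) τ := by
      intro τ hτ
      rw [hBK (hmem hs hτ.1 (hτ.2.trans ht))]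
      exact ((hKd s τ hs hτ.1 (hτ.2.trans ht)).mono (Icc_subset_Icc_right ht)).congr
        (fun u hu => hAK (hmem hs hu.1 (hu.2.trans ht))) (hAK (hmem hs hτ.1 (hτ.2.trans ht)))
    rw [intervalIntegral.integral_mul_const, integral_eq_sub_of_hasDerivWithinAt_Icc hst hderiv
      ((hB.comp (continuous_id.prodMk continuous_const)).intervalIntegrable _ _)]
    ring
  have hext {F : ℝ → ℝ → ℝ} {G : ℝ × ℝ → ℝ}
      (hGF : EqOn G (fun p => F p.1 p.2) (lowerTriangle a b)) {u : ℝ} (hu : u ∈ Icc a b) :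
      ∫ s in a..u, F u s * x s = ∫ s in a..u, G (u, s) * X s := by
    refine integral_congr fun s hs => ?_
    rw [uIcc_of_le hu.1] at hs
    rw [hGF (hmem hs.1 hs.2 hu.2), hXx ⟨hs.1, hs.2.trans hu.2⟩]
  refine ((hasDerivWithinAt_integral_volterra (A := fun t s => A (t, s) * X s)
    (B := fun t s => B (t, s) * X s) (hA.mul (hX.comp continuous_snd))
    (hB.mul (hX.comp continuous_snd)) hAB ht).congr (fun u hu => hext hAK hu)
    (hext hAK ht)).congr_deriv ?_
  rw [hAK (hmem ht.1 le_rfl ht.2), hXx ht, hext hBK ht]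

theorem le_mul_exp_of_le_add_mul_integral {u : ℝ → ℝ} {a b c K : ℝ}
    (hu : ContinuousOn u (Icc a b)) (hK : 0 ≤ K)
    (h : ∀ t ∈ Icc a b, u t ≤ c + K * ∫ s in a..t, u s) {t : ℝ} (ht : t ∈ Icc a b) :
    u t ≤ c * Real.exp (K * (t - a)) := by
  have hab : a ≤ b := ht.1.trans ht.2
  have hφ : ContinuousOn (fun t => ∫ s in a..t, u s) (Icc a b) := by
    rw [← uIcc_of_le hab] at hu ⊢
    exact continuousOn_primitive_interval hu.integrableOn_uIcc
  have hφ' (t : ℝ) (ht : t ∈ Ico a b) :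
      HasDerivWithinAt (fun t => ∫ s in a..t, u s) (u t) (Ici t) t := by
    have hnhds : Icc a b ∈ 𝓝[>] t := Icc_mem_nhdsGT_of_mem ht
    exact integral_hasDerivWithinAt_right
      ((hu.mono (Icc_subset_Icc_right ht.2.le)).intervalIntegrable_of_Icc ht.1)
      ((hu.stronglyMeasurableAtFilter_nhdsWithin measurableSet_Icc t).filter_mono
        (nhdsWithin_le_of_mem hnhds))
      ((hu t (Ico_subset_Icc_self ht)).mono_of_mem_nhdsWithin hnhds)
  have hgronwall := le_gronwallBound_of_liminf_deriv_right_le (δ := 0) (K := K) (ε := c) hφ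
    (fun t ht _ hr => (hφ' t ht).liminf_right_slope_le hr) (by simp)
    (fun t ht => by linarith [h t (Ico_subset_Icc_self ht)]) t ht
  calc u t ≤ c + K * gronwallBound 0 K c (t - a) := (h t ht).trans (by gcongr)
    _ = c * Real.exp (K * (t - a)) := by
      rcases hK.eq_or_lt with rfl | hK
      · simp [gronwallBound_K0]
      · rw [gronwallBound_of_K_ne_0 hK.ne']
        field_simp
        ring

theorem abs_le_mul_exp_of_eq_mul_add_integral {A g X : ℝ → ℝ} {B : ℝ → ℝ → ℝ} {a b k L M : ℝ}
    (hX : ContinuousOn X (Icc a b)) (hk : 0 < k) (hL : 0 ≤ L) (hA : ∀ t ∈ Icc a b, k ≤ |A t|)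
    (hB : ∀ t ∈ Icc a b, ∀ s ∈ Icc a t, |B t s| ≤ L) (hg : ∀ t ∈ Icc a b, |g t| ≤ M)
    (hgX : ∀ t ∈ Icc a b, g t = A t * X t + ∫ s in a..t, B t s * X s)
    {t : ℝ} (ht : t ∈ Icc a b) :
    |X t| ≤ M / k * Real.exp (L / k * (t - a)) := by
  refine le_mul_exp_of_le_add_mul_integral hX.abs (div_nonneg hL hk.le) (fun t ht => ?_) ht
  have hint : |∫ s in a..t, B t s * X s| ≤ L * ∫ s in a..t, |X s| := by
    rw [← intervalIntegral.integral_const_mul]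
    refine (Real.norm_eq_abs _).ge.trans <|
      norm_integral_le_of_norm_le ht.1 (ae_of_all _ fun s hs => ?_)
        (((hX.abs.mono (Icc_subset_Icc_right ht.2)).intervalIntegrable_of_Icc ht.1).const_mul L)
    rw [Real.norm_eq_abs, abs_mul]
    exact mul_le_mul_of_nonneg_right (hB t ht s ⟨hs.1.le, hs.2⟩) (abs_nonneg _)
  have hkX : k * |X t| ≤ M + L * ∫ s in a..t, |X s| :=
    calc k * |X t| ≤ |A t| * |X t| := by gcongr; exact hA t ht
      _ = |g t - ∫ s in a..t, B t s * X s| := by rw [hgX t ht, add_sub_cancel_right, abs_mul]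
      _ ≤ |g t| + |∫ s in a..t, B t s * X s| := abs_sub _ _
      _ ≤ M + L * ∫ s in a..t, |X s| := add_le_add (hg t ht) hint
  rw [div_mul_eq_mul_div, ← add_div, le_div_iff₀ hk]
  linarith

/-- Stability estimate for the linear Volterra equation of the first kind:
if `∫₀ᵗ K₁(t,s)x(s)ds = y(t)` on `[0,T]`, `k = min_{[0,T]} |K₁(t,t)| > 0` and
`L₁ = max_Δ |∂K₁/∂t|`, then `max |x| ≤ (1/k) e^{L₁ T/k} max |y'|`. -/
theorem stmt12 (T : ℝ) (hT : 0 < T)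
    (K₁ K₁t : ℝ → ℝ → ℝ)
    (hK₁ : ContinuousOn (fun p : ℝ × ℝ => K₁ p.1 p.2) {p | 0 ≤ p.2 ∧ p.2 ≤ p.1 ∧ p.1 ≤ T})
    (hK₁d : ∀ s t : ℝ, 0 ≤ s → s ≤ t → t ≤ T →
      HasDerivWithinAt (fun τ => K₁ τ s) (K₁t t s) (Icc s T) t)
    (hK₁tc : ContinuousOn (fun p : ℝ × ℝ => K₁t p.1 p.2) {p | 0 ≤ p.2 ∧ p.2 ≤ p.1 ∧ p.1 ≤ T})
    (k L₁ : ℝ)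
    (hk : k = sInf ((fun t => |K₁ t t|) '' Icc (0:ℝ) T))
    (hL : L₁ = sSup ((fun p : ℝ × ℝ => |K₁t p.1 p.2|) '' {p | 0 ≤ p.2 ∧ p.2 ≤ p.1 ∧ p.1 ≤ T}))
    (hkpos : 0 < k)
    (x : ℝ → ℝ) (hx : ContinuousOn x (Icc 0 T))
    (y y' : ℝ → ℝ)
    (hy' : ∀ t ∈ Icc (0:ℝ) T, HasDerivWithinAt y (y' t) (Icc 0 T) t)
    (heq : ∀ t ∈ Icc (0:ℝ) T, (∫ s in (0:ℝ)..t, K₁ t s * x s) = y t) :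
    ∀ t ∈ Icc (0:ℝ) T,
      |x t| ≤ (1 / k) * Real.exp (L₁ * T / k) * sSup ((fun τ => |y' τ|) '' Icc (0:ℝ) T) := by
  have hy'_eq (t : ℝ) (ht : t ∈ Icc 0 T) : y' t = K₁ t t * x t + ∫ s in 0..t, K₁t t s * x s :=
    (uniqueDiffOn_Icc hT t ht).eq_deriv _ (hy' t ht)
      ((hasDerivWithinAt_integral_kernel_mul hK₁ hK₁d hK₁tc hx ht).congr
        (fun u hu => (heq u hu).symm) (heq t ht).symm)
  have hy'_cont : ContinuousOn y' (Icc 0 T) := by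
    refine ContinuousOn.congr ?_ hy'_eq
    exact ((hK₁.comp (continuousOn_id.prodMk continuousOn_id) fun t ht => ⟨ht.1, le_rfl, ht.2⟩).mul
      hx).add (continuousOn_integral_of_continuousOn_lowerTriangle
        (hK₁tc.mul (hx.comp continuousOn_snd fun p hp => ⟨hp.1, hp.2.1.trans hp.2.2⟩)))
  set M := sSup ((fun τ => |y' τ|) '' Icc (0:ℝ) T)
  have hM (t : ℝ) (ht : t ∈ Icc 0 T) : |y' t| ≤ M :=
    le_csSup (isCompact_Icc.bddAbove_image hy'_cont.abs) ⟨t, ht, rfl⟩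
  have hkK (t : ℝ) (ht : t ∈ Icc 0 T) : k ≤ |K₁ t t| :=
    hk ▸ csInf_le ⟨0, forall_mem_image.2 fun _ _ => abs_nonneg _⟩ ⟨t, ht, rfl⟩
  have hKL (t : ℝ) (ht : t ∈ Icc 0 T) (s : ℝ) (hs : s ∈ Icc 0 t) : |K₁t t s| ≤ L₁ :=
    hL ▸ le_csSup ((isCompact_lowerTriangle 0 T).bddAbove_image hK₁tc.abs)
      ⟨(t, s), ⟨hs.1, hs.2, ht.2⟩, rfl⟩
  have hL₁ : 0 ≤ L₁ := (abs_nonneg _).trans (hKL 0 ⟨le_rfl, hT.le⟩ 0 ⟨le_rfl, le_rfl⟩)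
  have hM₀ : 0 ≤ M := (abs_nonneg _).trans (hM 0 ⟨le_rfl, hT.le⟩)
  intro t ht
  calc |x t| ≤ M / k * Real.exp (L₁ / k * (t - 0)) :=
      abs_le_mul_exp_of_eq_mul_add_integral hx hkpos hL₁ hkK hKL hM hy'_eq ht
    _ ≤ M / k * Real.exp (L₁ * T / k) := by
      gcongr M / k * Real.exp ?_
      rw [sub_zero, div_mul_eq_mul_div]
      gcongr
      exact ht.2
    _ = 1 / k * Real.exp (L₁ * T / k) * M := by ring
end

section
/- Let N ≥ 2 and T > 0. Let F : [0,T] → ℝ be continuous, positive and non-decreasing; for m = 1,…,N let L_m : [0,T] → ℝ be continuous, non-negative and non-decreasing; for m = 2,…,N let M_m : [0,T] → ℝ be continuous, non-negative and non-decreasing. Suppose ψ : [0,T] → ℝ is continuous, non-negative, satisfies Σ_{m=2}^{N} m·M_m(t)·(∫₀ᵗ ψ(s)ds)^{m-1} < 1 for all t ∈ [0,T], and solves ψ(t) = F(t) + ψ(t)·Σ_{m=2}^{N} m·M_m(t)·(∫₀ᵗ ψ(s)ds)^{m-1} + Σ_{m=1}^{N} L_m(t)·(∫₀ᵗ ψ(s)ds)^m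 for all t ∈ [0,T]. If x : [0,T] → ℝ is continuous and satisfies |x(t)| ≤ F(t) + |x(t)|·Σ_{m=2}^{N} m·M_m(t)·(∫₀ᵗ |x(s)|ds)^{m-1} + Σ_{m=1}^{N} L_m(t)·(∫₀ᵗ |x(s)|ds)^m for all t ∈ [0,T], then |x(t)| ≤ ψ(t) for all t ∈ [0,T]. -/
/-!
Write `X t = ∫₀ᵗ |x|`, `Ψ t = ∫₀ᵗ ψ`, and `S t y`, `A t y` for the two polynomial sums in `y`.
Subtracting the equation for `ψ` from the inequality for `x` gives
`(|x| - ψ) (1 - S t Ψ) ≤ |x| (S t X - S t Ψ) + (A t X - A t Ψ)`.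
The polynomials have nonnegative nondecreasing coefficients, so they are nondecreasing in `y` and
Lipschitz on bounded sets uniformly in `t`, and `1 - S t (Ψ t) ≥ 1 - S T (Ψ T) > 0`. Hence
`(X - Ψ)' ≤ K (X - Ψ)` wherever `X > Ψ`, and since `X - Ψ` vanishes at `0` it stays `≤ 0`.
Monotonicity then makes the right-hand side above nonpositive, so `|x| ≤ ψ`.
-/

open Set intervalIntegral

theorem nonpos_of_hasDerivWithinAt_le_mul_of_pos {w w' : ℝ → ℝ} {a b K : ℝ}
    (hw : ContinuousOn w (Icc a b)) (hw' : ∀ t ∈ Ico a b, HasDerivWithinAt w (w' t) (Ici t) t)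
    (ha : w a ≤ 0) (hK : ∀ t ∈ Ico a b, 0 < w t → w' t ≤ K * w t) :
    ∀ t ∈ Icc a b, w t ≤ 0 := by
  intro t ht
  set E : ℝ → ℝ := fun u => Real.exp ((|K| + 1) * (u - a))
  have hE : ∀ u, HasDerivAt E (E u * (|K| + 1)) u := fun u => by
    simpa using (((hasDerivAt_id u).sub_const a).const_mul (|K| + 1)).exp
  have hE_pos : ∀ u, 0 < E u := fun u => Real.exp_pos _
  -- `w` can touch the barrier `ε E` only where `w > 0`, and there `E` grows faster than `w`
  have below_barrier : ∀ ε > 0, w t ≤ ε * E t := fun ε hε => by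
    have ha' : w a ≤ ε * E a := by simpa [E] using ha.trans hε.le
    refine image_le_of_deriv_right_lt_deriv_boundary' hw hw' ha'
      (fun u _ => ((hE u).const_mul ε).continuousAt.continuousWithinAt)
      (fun u _ => ((hE u).const_mul ε).hasDerivWithinAt) (fun u hu hwu => ?_) ht
    have hpos : 0 < w u := hwu ▸ mul_pos hε (hE_pos u)
    calc w' u ≤ K * w u := hK u hu hpos
      _ ≤ |K| * w u := mul_le_mul_of_nonneg_right (le_abs_self K) hpos.le
      _ < (|K| + 1) * w u := by linarith
      _ = ε * (E u * (|K| + 1)) := by rw [hwu]; ring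
  refine le_of_forall_pos_le_add fun δ hδ => ?_
  have h := below_barrier (δ / E t) (div_pos hδ (hE_pos t))
  rwa [div_mul_cancel₀ δ (hE_pos t).ne', ← zero_add δ] at h

theorem hasDerivWithinAt_integral_Icc {f : ℝ → ℝ} {a b t : ℝ} (hf : ContinuousOn f (Icc a b))
    (ht : t ∈ Icc a b) :
    HasDerivWithinAt (fun u => ∫ s in a..u, f s) (f t) (Icc a b) t := by
  -- the `FTCFilter` instance for `Icc a b` is found through this `Fact`
  have : Fact (t ∈ Icc a b) := ⟨ht⟩
  exact integral_hasDerivWithinAt_right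
    ((hf.mono (uIcc_subset_Icc ⟨le_rfl, ht.1.trans ht.2⟩ ht)).intervalIntegrable)
    (hf.stronglyMeasurableAtFilter_nhdsWithin measurableSet_Icc t) (hf t ht)

theorem integral_mem_Icc_zero_integral_of_nonneg {f : ℝ → ℝ} {a b t : ℝ}
    (hf : ContinuousOn f (Icc a b)) (hnn : ∀ s ∈ Icc a b, 0 ≤ f s) (ht : t ∈ Icc a b) :
    ∫ s in a..t, f s ∈ Icc 0 (∫ s in a..b, f s) :=
  ⟨integral_nonneg ht.1 fun s hs => hnn s ⟨hs.1, hs.2.trans ht.2⟩,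
    integral_mono_interval le_rfl ht.1 ht.2
      (MeasureTheory.ae_restrict_of_forall_mem measurableSet_Ioc fun s hs =>
        hnn s (Ioc_subset_Icc_self hs))
      (hf.intervalIntegrable_of_Icc (ht.1.trans ht.2))⟩

theorem integral_le_integral_of_sub_le_mul {f g : ℝ → ℝ} {a b K : ℝ}
    (hf : ContinuousOn f (Icc a b)) (hg : ContinuousOn g (Icc a b))
    (hK : ∀ t ∈ Ico a b, ∫ s in a..t, g s < ∫ s in a..t, f s →
      f t - g t ≤ K * ((∫ s in a..t, f s) - ∫ s in a..t, g s)) :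
    ∀ t ∈ Icc a b, ∫ s in a..t, f s ≤ ∫ s in a..t, g s := by
  have hw : ∀ t ∈ Icc a b, HasDerivWithinAt (fun u => (∫ s in a..u, f s) - ∫ s in a..u, g s)
      (f t - g t) (Icc a b) t := fun t ht =>
    (hasDerivWithinAt_integral_Icc hf ht).sub (hasDerivWithinAt_integral_Icc hg ht)
  intro t ht
  refine sub_nonpos.1 (nonpos_of_hasDerivWithinAt_le_mul_of_pos
    (fun u hu => (hw u hu).continuousWithinAt)
    (fun u hu => (hw u (Ico_subset_Icc_self hu)).mono_of_mem_nhdsWithin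
      (Icc_mem_nhdsGE_of_mem hu))
    (by simp) (fun u hu hpos => hK u hu (sub_pos.1 hpos)) t ht)

section WeightedPowerSum

variable {ι R : Type*} {s : Finset ι} (e : ι → ℕ)

theorem sum_mul_pow_le_sum_mul_pow [CommSemiring R] [PartialOrder R] [IsOrderedRing R]
    {c d : ι → R} {y z : R} (hc : ∀ i ∈ s, 0 ≤ c i) (hcd : ∀ i ∈ s, c i ≤ d i) (hy : 0 ≤ y)
    (hyz : y ≤ z) : ∑ i ∈ s, c i * y ^ e i ≤ ∑ i ∈ s, d i * z ^ e i :=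
  Finset.sum_le_sum fun i hi => mul_le_mul (hcd i hi) (pow_le_pow_left₀ hy hyz _)
    (pow_nonneg hy _) ((hc i hi).trans (hcd i hi))

theorem abs_sum_mul_pow_sub_sum_mul_pow_le [CommRing R] [LinearOrder R] [IsOrderedRing R]
    {c d : ι → R} {y z B : R} (hcd : ∀ i ∈ s, |c i| ≤ d i) (hy : |y| ≤ B) (hz : |z| ≤ B) :
    |∑ i ∈ s, c i * y ^ e i - ∑ i ∈ s, c i * z ^ e i| ≤
      (∑ i ∈ s, d i * e i * B ^ (e i - 1)) * |y - z| := by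
  rw [← Finset.sum_sub_distrib, Finset.sum_mul]
  refine (Finset.abs_sum_le_sum_abs _ _).trans (Finset.sum_le_sum fun i hi => ?_)
  have hd : 0 ≤ d i := (abs_nonneg _).trans (hcd i hi)
  calc |c i * y ^ e i - c i * z ^ e i| = |c i| * |y ^ e i - z ^ e i| := by
        rw [← mul_sub, abs_mul]
    _ ≤ d i * (|y - z| * e i * max |y| |z| ^ (e i - 1)) :=
        mul_le_mul (hcd i hi) (abs_pow_sub_pow_le ..) (abs_nonneg _) hd
    _ ≤ d i * (|y - z| * e i * B ^ (e i - 1)) := by gcongr; exact max_le hy hz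
    _ = d i * e i * B ^ (e i - 1) * |y - z| := by ring

variable {c : ι → ℝ → ℝ} {a b : ℝ}

theorem monotoneOn_sum_mul_pow (hc : ∀ i ∈ s, ∀ t ∈ Icc a b, 0 ≤ c i t) :
    ∀ t ∈ Icc a b, MonotoneOn (fun y => ∑ i ∈ s, c i t * y ^ e i) (Ici 0) :=
  fun t ht _ hy _ _ hyz =>
    sum_mul_pow_le_sum_mul_pow e (fun i hi => hc i hi t ht) (fun _ _ => le_rfl) hy hyz

theorem exists_sum_mul_pow_sub_sum_mul_pow_le (hc : ∀ i ∈ s, ∀ t ∈ Icc a b, 0 ≤ c i t)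
    (hmono : ∀ i ∈ s, MonotoneOn (c i) (Icc a b)) (B : ℝ) :
    ∃ K, ∀ t ∈ Icc a b, ∀ y z, 0 ≤ z → z ≤ y → y ≤ B →
      ∑ i ∈ s, c i t * y ^ e i - ∑ i ∈ s, c i t * z ^ e i ≤ K * (y - z) := by
  refine ⟨∑ i ∈ s, c i b * e i * B ^ (e i - 1), fun t ht y z hz hzy hyB => ?_⟩
  have hb : b ∈ Icc a b := ⟨ht.1.trans ht.2, le_rfl⟩
  have h := abs_sum_mul_pow_sub_sum_mul_pow_le e (s := s) (c := fun i => c i t)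
    (fun i hi => (abs_of_nonneg (hc i hi t ht)).trans_le (hmono i hi ht hb ht.2))
    ((abs_of_nonneg (hz.trans hzy)).trans_le hyB) ((abs_of_nonneg hz).trans_le (hzy.trans hyB))
  rw [abs_of_nonneg (sub_nonneg.2 hzy)] at h
  exact (le_abs_self _).trans h

end WeightedPowerSum

theorem abs_le_of_integral_inequality {T σ : ℝ} {F ψ x : ℝ → ℝ} {S A : ℝ → ℝ → ℝ}
    (hSmono : ∀ t ∈ Icc 0 T, MonotoneOn (S t) (Ici 0))
    (hAmono : ∀ t ∈ Icc 0 T, MonotoneOn (A t) (Ici 0))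
    (hSlip : ∀ B, ∃ K, ∀ t ∈ Icc 0 T, ∀ y z, 0 ≤ z → z ≤ y → y ≤ B →
      S t y - S t z ≤ K * (y - z))
    (hAlip : ∀ B, ∃ K, ∀ t ∈ Icc 0 T, ∀ y z, 0 ≤ z → z ≤ y → y ≤ B →
      A t y - A t z ≤ K * (y - z))
    (hψc : ContinuousOn ψ (Icc 0 T)) (hψnn : ∀ t ∈ Icc (0:ℝ) T, 0 ≤ ψ t)
    (hσ : σ < 1) (hgap : ∀ t ∈ Icc 0 T, S t (∫ s in (0:ℝ)..t, ψ s) ≤ σ)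
    (hψeq : ∀ t ∈ Icc 0 T,
      ψ t = F t + ψ t * S t (∫ s in (0:ℝ)..t, ψ s) + A t (∫ s in (0:ℝ)..t, ψ s))
    (hx : ContinuousOn x (Icc 0 T))
    (hineq : ∀ t ∈ Icc 0 T,
      |x t| ≤ F t + |x t| * S t (∫ s in (0:ℝ)..t, |x s|) + A t (∫ s in (0:ℝ)..t, |x s|)) :
    ∀ t ∈ Icc (0:ℝ) T, |x t| ≤ ψ t := by
  set X := fun t => ∫ s in (0:ℝ)..t, |x s|
  set Ψ := fun t => ∫ s in (0:ℝ)..t, ψ s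
  have hXmem : ∀ t ∈ Icc 0 T, X t ∈ Icc 0 (X T) := fun t ht =>
    integral_mem_Icc_zero_integral_of_nonneg hx.abs (fun s _ => abs_nonneg _) ht
  have hΨmem : ∀ t ∈ Icc 0 T, Ψ t ∈ Icc 0 (Ψ T) := fun t ht =>
    integral_mem_Icc_zero_integral_of_nonneg hψc hψnn ht
  have hcompare : ∀ t ∈ Icc 0 T, (|x t| - ψ t) * (1 - S t (Ψ t)) ≤
      |x t| * (S t (X t) - S t (Ψ t)) + (A t (X t) - A t (Ψ t)) := fun t ht => by
    linear_combination hineq t ht - hψeq t ht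
  have hXΨ : ∀ t ∈ Icc 0 T, X t ≤ Ψ t := by
    obtain ⟨Cx, hCx⟩ := isCompact_Icc.exists_bound_of_continuousOn hx
    obtain ⟨KS, hKS⟩ := hSlip (max (X T) (Ψ T))
    obtain ⟨KA, hKA⟩ := hAlip (max (X T) (Ψ T))
    refine integral_le_integral_of_sub_le_mul (K := (Cx * KS + KA) / (1 - σ)) hx.abs hψc
      fun t ht hlt => ?_
    replace ht := Ico_subset_Icc_self ht
    have hX := hXmem t ht
    have hΨ := hΨmem t ht
    have hxC : |x t| ≤ Cx := hCx t ht
    have hS := hKS t ht (X t) (Ψ t) hΨ.1 hlt.le (hX.2.trans (le_max_left _ _))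
    have hA := hKA t ht (X t) (Ψ t) hΨ.1 hlt.le (hX.2.trans (le_max_left _ _))
    have hS0 := sub_nonneg.2 (hSmono t ht hΨ.1 hX.1 hlt.le)
    have hA0 := sub_nonneg.2 (hAmono t ht hΨ.1 hX.1 hlt.le)
    have hR : |x t| * (S t (X t) - S t (Ψ t)) + (A t (X t) - A t (Ψ t)) ≤
        (Cx * KS + KA) * (X t - Ψ t) := by
      have := mul_le_mul hxC hS hS0 ((abs_nonneg _).trans hxC)
      linarith
    rw [div_mul_eq_mul_div, le_div_iff₀ (sub_pos.2 hσ)]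
    rcases le_total (|x t|) (ψ t) with h | h
    · calc (|x t| - ψ t) * (1 - σ) ≤ 0 :=
            mul_nonpos_of_nonpos_of_nonneg (sub_nonpos.2 h) (sub_pos.2 hσ).le
        _ ≤ _ := (add_nonneg (mul_nonneg (abs_nonneg _) hS0) hA0).trans hR
    · calc (|x t| - ψ t) * (1 - σ) ≤ (|x t| - ψ t) * (1 - S t (Ψ t)) := by
            gcongr
            exact hgap t ht
        _ ≤ _ := (hcompare t ht).trans hR
  intro t ht
  have hS := hSmono t ht (hXmem t ht).1 (hΨmem t ht).1 (hXΨ t ht)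
  have hA := hAmono t ht (hXmem t ht).1 (hΨmem t ht).1 (hXΨ t ht)
  refine sub_nonpos.1 (nonpos_of_mul_nonpos_left ((hcompare t ht).trans ?_)
    (sub_pos.2 ((hgap t ht).trans_lt hσ)))
  exact add_nonpos (mul_nonpos_of_nonneg_of_nonpos (abs_nonneg _) (sub_nonpos.2 hS))
    (sub_nonpos.2 hA)

theorem stmt15_general (N : ℕ) (T : ℝ)
    (F : ℝ → ℝ) (L M : ℕ → ℝ → ℝ)
    (hLnn : ∀ m ∈ Finset.Icc 1 N, ∀ t ∈ Icc (0:ℝ) T, 0 ≤ L m t)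
    (hLmono : ∀ m ∈ Finset.Icc 1 N, MonotoneOn (L m) (Icc 0 T))
    (hMnn : ∀ m ∈ Finset.Icc 2 N, ∀ t ∈ Icc (0:ℝ) T, 0 ≤ M m t)
    (hMmono : ∀ m ∈ Finset.Icc 2 N, MonotoneOn (M m) (Icc 0 T))
    (ψ : ℝ → ℝ) (hψc : ContinuousOn ψ (Icc 0 T))
    (hψnn : ∀ t ∈ Icc (0:ℝ) T, 0 ≤ ψ t)
    (hψlt : ∀ t ∈ Icc (0:ℝ) T,
      (∑ m ∈ Finset.Icc 2 N,
        (m : ℝ) * M m t * (∫ s in (0:ℝ)..t, ψ s) ^ (m - 1)) < 1)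
    (hψeq : ∀ t ∈ Icc (0:ℝ) T,
      ψ t = F t +
        ψ t * (∑ m ∈ Finset.Icc 2 N,
          (m : ℝ) * M m t * (∫ s in (0:ℝ)..t, ψ s) ^ (m - 1)) +
        ∑ m ∈ Finset.Icc 1 N, L m t * (∫ s in (0:ℝ)..t, ψ s) ^ m)
    (x : ℝ → ℝ) (hx : ContinuousOn x (Icc 0 T))
    (hineq : ∀ t ∈ Icc (0:ℝ) T,
      |x t| ≤ F t +
        |x t| * (∑ m ∈ Finset.Icc 2 N,
          (m : ℝ) * M m t * (∫ s in (0:ℝ)..t, |x s|) ^ (m - 1)) +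
        ∑ m ∈ Finset.Icc 1 N, L m t * (∫ s in (0:ℝ)..t, |x s|) ^ m) :
    ∀ t ∈ Icc (0:ℝ) T, |x t| ≤ ψ t := by
  intro t ht
  have hTmem : T ∈ Icc (0:ℝ) T := ⟨ht.1.trans ht.2, le_rfl⟩
  have hcM : ∀ m ∈ Finset.Icc 2 N, ∀ t ∈ Icc (0:ℝ) T, 0 ≤ (m : ℝ) * M m t :=
    fun m hm t ht => mul_nonneg m.cast_nonneg (hMnn m hm t ht)
  have hcMmono : ∀ m ∈ Finset.Icc 2 N, MonotoneOn (fun t => (m : ℝ) * M m t) (Icc 0 T) :=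
    fun m hm _ hu _ hv huv => mul_le_mul_of_nonneg_left (hMmono m hm hu hv huv) m.cast_nonneg
  have hΨmem : ∀ t ∈ Icc (0:ℝ) T, ∫ s in (0:ℝ)..t, ψ s ∈ Icc 0 (∫ s in (0:ℝ)..T, ψ s) :=
    fun t ht => integral_mem_Icc_zero_integral_of_nonneg hψc hψnn ht
  refine abs_le_of_integral_inequality
    (monotoneOn_sum_mul_pow (fun m => m - 1) (c := fun m t => (m : ℝ) * M m t) hcM)
    (monotoneOn_sum_mul_pow (fun m => m) hLnn)
    (exists_sum_mul_pow_sub_sum_mul_pow_le (fun m => m - 1) hcM hcMmono)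
    (exists_sum_mul_pow_sub_sum_mul_pow_le (fun m => m) hLnn hLmono)
    hψc hψnn (hψlt T hTmem) (fun t ht => ?_) hψeq hx hineq t ht
  exact sum_mul_pow_le_sum_mul_pow _ (fun m hm => hcM m hm t ht)
    (fun m hm => hcMmono m hm ht hTmem ht.2) (hΨmem t ht).1 (hΨmem t ht).2

/-- Majorant principle for the polynomial integral inequality of degree `N`:
any continuous solution `x` of
`|x(t)| ≤ F(t) + |x(t)| Σ_{m=2}^N m M_m(t)(∫₀ᵗ|x|)^{m-1} + Σ_{m=1}^N L_m(t)(∫₀ᵗ|x|)^m`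
is bounded by the continuous solution `ψ` of the corresponding majorant equation,
as long as `Σ_{m=2}^N m M_m(t)(∫₀ᵗ ψ)^{m-1} < 1` on `[0,T]`. -/
theorem stmt15 (N : ℕ) (hN : 2 ≤ N) (T : ℝ) (hT : 0 < T)
    (F : ℝ → ℝ) (L M : ℕ → ℝ → ℝ)
    (hFc : ContinuousOn F (Icc 0 T)) (hFpos : ∀ t ∈ Icc (0:ℝ) T, 0 < F t)
    (hFmono : MonotoneOn F (Icc 0 T))
    (hLc : ∀ m ∈ Finset.Icc 1 N, ContinuousOn (L m) (Icc 0 T))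
    (hLnn : ∀ m ∈ Finset.Icc 1 N, ∀ t ∈ Icc (0:ℝ) T, 0 ≤ L m t)
    (hLmono : ∀ m ∈ Finset.Icc 1 N, MonotoneOn (L m) (Icc 0 T))
    (hMc : ∀ m ∈ Finset.Icc 2 N, ContinuousOn (M m) (Icc 0 T))
    (hMnn : ∀ m ∈ Finset.Icc 2 N, ∀ t ∈ Icc (0:ℝ) T, 0 ≤ M m t)
    (hMmono : ∀ m ∈ Finset.Icc 2 N, MonotoneOn (M m) (Icc 0 T))
    (ψ : ℝ → ℝ) (hψc : ContinuousOn ψ (Icc 0 T))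
    (hψnn : ∀ t ∈ Icc (0:ℝ) T, 0 ≤ ψ t)
    (hψlt : ∀ t ∈ Icc (0:ℝ) T,
      (∑ m ∈ Finset.Icc 2 N,
        (m : ℝ) * M m t * (∫ s in (0:ℝ)..t, ψ s) ^ (m - 1)) < 1)
    (hψeq : ∀ t ∈ Icc (0:ℝ) T,
      ψ t = F t +
        ψ t * (∑ m ∈ Finset.Icc 2 N,
          (m : ℝ) * M m t * (∫ s in (0:ℝ)..t, ψ s) ^ (m - 1)) +
        ∑ m ∈ Finset.Icc 1 N, L m t * (∫ s in (0:ℝ)..t, ψ s) ^ m)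
    (x : ℝ → ℝ) (hx : ContinuousOn x (Icc 0 T))
    (hineq : ∀ t ∈ Icc (0:ℝ) T,
      |x t| ≤ F t +
        |x t| * (∑ m ∈ Finset.Icc 2 N,
          (m : ℝ) * M m t * (∫ s in (0:ℝ)..t, |x s|) ^ (m - 1)) +
        ∑ m ∈ Finset.Icc 1 N, L m t * (∫ s in (0:ℝ)..t, |x s|) ^ m) :
    ∀ t ∈ Icc (0:ℝ) T, |x t| ≤ ψ t :=
  stmt15_general N T F L M hLnn hLmono hMnn hMmono ψ hψc hψnn hψlt hψeq x hx hineq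
end
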